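/- arXiv:1305.3549 — 5 statements merged into one kernel-verified Lean document; each statement's English description precedes it below -/
import Mathlib

section
/- With notation as in the supergravity c-map, define the matrices I = Im 𝒩, R = Re 𝒩 where 𝒩_{IJ} = F̄_{IJ} + i (∑_K N_{IK}z^K)(∑_L N_{JL}z^L)/(∑ N_{IJ}z^I z^J), and let Ĥ be the block matrix ((I^{-1}, I^{-1}R),(R I^{-1}, I + R I^{-1} R)). Let H be the block matrix ((N^{-1}, ½N^{-1}R₀),(½R₀N^{-1}, ¼(N + R₀N^{-1}R₀))) with R₀ = 2 Re F, and let H̆ = ½ ((z z̄^t + z̄ z^t, z z̄^t F̄ + z̄ z^t F),(F̄ z̄ z^t + F z z̄^t, F z z̄^t F̄ + F̄ z̄ z^t F)) where F = (F_{IJ}). Then Ĥ = -2H + (4/r²) H̆, where r² = z^t N z̄. -/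
open Matrix

set_option maxHeartbeats 1600000 in
/-- With `𝒩 = F̄ + i(Nz)(Nz)ᵗ/(zᵗNz)`, `I = Im 𝒩`, `R = Re 𝒩`,
the block matrix `Ĥ = ((I⁻¹, I⁻¹R),(RI⁻¹, I + RI⁻¹R))` satisfies
`Ĥ = -2H + (4/r²)H̆` with `H`, `H̆` the indicated block matrices and `r² = zᵗNz̄`. -/
theorem stmt_2 {n : ℕ} (F : Matrix (Fin (n+1)) (Fin (n+1)) ℂ)
    (hFsymm : Fᵀ = F)
    (Fb : Matrix (Fin (n+1)) (Fin (n+1)) ℂ) (hFb : Fb = F.map (starRingEnd ℂ))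
    (N R0 : Matrix (Fin (n+1)) (Fin (n+1)) ℂ)
    (hN : N = (Complex.I)⁻¹ • (F - Fb))    -- N = 2 Im F
    (hR0 : R0 = F + Fb)                     -- R₀ = 2 Re F
    (hNdet : IsUnit N.det)
    (z zb : Matrix (Fin (n+1)) (Fin 1) ℂ) (hzb : zb = z.map (starRingEnd ℂ))
    (r2 : ℂ) (hr2 : r2 = (zᵀ * N * zb) 0 0)
    (hr2pos : 0 < r2.re ∧ r2.im = 0)
    (hzz : (zᵀ * N * z) 0 0 ≠ 0)
    (𝒩 : Matrix (Fin (n+1)) (Fin (n+1)) ℂ)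
    (h𝒩 : ∀ I J, 𝒩 I J = Fb I J + Complex.I * ((N * z) I 0) * ((N * z) J 0) / (zᵀ * N * z) 0 0)
    (cI cR : Matrix (Fin (n+1)) (Fin (n+1)) ℂ)
    (hcI : ∀ I J, cI I J = (𝒩 I J - (starRingEnd ℂ) (𝒩 I J)) / (2 * Complex.I))  -- Im 𝒩
    (hcR : ∀ I J, cR I J = (𝒩 I J + (starRingEnd ℂ) (𝒩 I J)) / 2)               -- Re 𝒩
    (hcIdet : IsUnit cI.det) :
    fromBlocks cI⁻¹ (cI⁻¹ * cR) (cR * cI⁻¹) (cI + cR * cI⁻¹ * cR)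
      = (-2 : ℂ) • fromBlocks N⁻¹ ((1/2 : ℂ) • (N⁻¹ * R0)) ((1/2 : ℂ) • (R0 * N⁻¹))
            ((1/4 : ℂ) • (N + R0 * N⁻¹ * R0))
        + (4 / r2) • ((1/2 : ℂ) • fromBlocks (z * zbᵀ + zb * zᵀ)
            (z * zbᵀ * Fb + zb * zᵀ * F) (Fb * zb * zᵀ + F * z * zbᵀ)
            (F * z * zbᵀ * Fb + Fb * zb * zᵀ * F)) := by
  classical
  -- basic conjugation facts
  have hFbc : Fb.map (starRingEnd ℂ) = F := by
    rw [hFb]; ext i j; simp [Matrix.map_apply]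
  have hzbc : zb.map (starRingEnd ℂ) = z := by
    rw [hzb]; ext i j; simp [Matrix.map_apply]
  have hNc : N.map (starRingEnd ℂ) = N := by
    rw [hN]; ext i j
    simp [Matrix.map_apply, Matrix.smul_apply, Matrix.sub_apply, hFb, Complex.inv_I,
      Complex.conj_I, _root_.map_mul, _root_.map_sub]
    ring
  have hFbsymm : Fbᵀ = Fb := by
    rw [hFb, ← Matrix.transpose_map, hFsymm]
  have hNsymm : Nᵀ = N := by
    rw [hN, Matrix.transpose_smul, Matrix.transpose_sub, hFsymm, hFbsymm]
  -- scalars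
  set a : ℂ := (zᵀ * N * z) 0 0 with ha_def
  set ab : ℂ := (zbᵀ * N * zb) 0 0 with hab_def
  have hca : (starRingEnd ℂ) a = ab := by
    have h1 : (zᵀ * N * z).map (starRingEnd ℂ) = zbᵀ * N * zb := by
      rw [Matrix.map_mul, Matrix.map_mul, hNc, Matrix.transpose_map, ← hzb]
    calc (starRingEnd ℂ) a = ((zᵀ * N * z).map (starRingEnd ℂ)) 0 0 := rfl
    _ = ab := by rw [h1]
  have ha : a ≠ 0 := hzz
  have hab : ab ≠ 0 := by
    rw [← hca]; simpa using hzz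
  clear_value a ab
  have hr2ne : r2 ≠ 0 := by
    intro h
    rw [h] at hr2pos
    simp at hr2pos
  -- conjugate of N*z
  have hNzc : (N * z).map (starRingEnd ℂ) = N * zb := by
    rw [Matrix.map_mul, hNc, ← hzb]
  have hvz : ∀ I, (starRingEnd ℂ) ((N * z) I 0) = (N * zb) I 0 := by
    intro I
    calc (starRingEnd ℂ) ((N * z) I 0) = ((N * z).map (starRingEnd ℂ)) I 0 := rfl
    _ = (N * zb) I 0 := by rw [hNzc]
  -- rank one matrices
  set vv : Matrix (Fin (n+1)) (Fin (n+1)) ℂ := N * (z * (zᵀ * N)) with hvv_def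
  set wv : Matrix (Fin (n+1)) (Fin (n+1)) ℂ := N * (zb * (zbᵀ * N)) with hwv_def
  have hrow : ∀ (w : Matrix (Fin (n+1)) (Fin 1) ℂ), wᵀ * N = (N * w)ᵀ := by
    intro w
    rw [Matrix.transpose_mul, hNsymm]
  have hvvE : ∀ I J, vv I J = (N * z) I 0 * (N * z) J 0 := by
    intro I J
    have h2 : vv = (N * z) * (N * z)ᵀ := by
      rw [hvv_def, ← hrow z, Matrix.mul_assoc]
    rw [h2, Matrix.mul_apply]
    simp [Matrix.transpose_apply, Fin.sum_univ_one]
  have hwvE : ∀ I J, wv I J = (N * zb) I 0 * (N * zb) J 0 := by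
    intro I J
    have h2 : wv = (N * zb) * (N * zb)ᵀ := by
      rw [hwv_def, ← hrow zb, Matrix.mul_assoc]
    rw [h2, Matrix.mul_apply]
    simp [Matrix.transpose_apply, Fin.sum_univ_one]
  have hNE : ∀ I J, N I J = (Complex.I)⁻¹ * (F I J - Fb I J) := by
    intro I J; rw [hN]; simp [Matrix.smul_apply, Matrix.sub_apply]
  have h𝒩c : ∀ I J, (starRingEnd ℂ) (𝒩 I J)
      = F I J - Complex.I * ((N * zb) I 0) * ((N * zb) J 0) / ab := by
    intro I J
    rw [h𝒩 I J]
    rw [_root_.map_add, map_div₀, _root_.map_mul, _root_.map_mul, Complex.conj_I,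
      hvz I, hvz J, hca]
    have : (starRingEnd ℂ) (Fb I J) = F I J := by
      calc (starRingEnd ℂ) (Fb I J) = (Fb.map (starRingEnd ℂ)) I J := rfl
      _ = F I J := by rw [hFbc]
    rw [this]
    ring
  have hcImat : cI = (-(1/2) : ℂ) • N + (2*a)⁻¹ • vv + (2*ab)⁻¹ • wv := by
    ext I J
    rw [Matrix.add_apply, Matrix.add_apply, Matrix.smul_apply, Matrix.smul_apply,
      Matrix.smul_apply, hcI I J, h𝒩c I J, h𝒩 I J, hvvE I J, hwvE I J, hNE I J]
    simp only [smul_eq_mul]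
    field_simp
    ring_nf
  have hcRmat : cR = ((1/2) : ℂ) • R0 + (Complex.I * (2*a)⁻¹) • vv
      + (-Complex.I * (2*ab)⁻¹) • wv := by
    ext I J
    rw [Matrix.add_apply, Matrix.add_apply, Matrix.smul_apply, Matrix.smul_apply,
      Matrix.smul_apply, hcR I J, h𝒩c I J, h𝒩 I J, hvvE I J, hwvE I J, hR0,
      Matrix.add_apply]
    simp only [smul_eq_mul]
    field_simp
    ring_nf
  -- inverse lemmas
  have hNN : N * N⁻¹ = 1 := Matrix.mul_nonsing_inv N hNdet
  have hNN' : N⁻¹ * N = 1 := Matrix.nonsing_inv_mul N hNdet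
  have lNi : ∀ (X : Matrix (Fin (n+1)) (Fin (n+1)) ℂ), N * (N⁻¹ * X) = X := by
    intro X; rw [← Matrix.mul_assoc, hNN, Matrix.one_mul]
  have lNi' : ∀ (X : Matrix (Fin (n+1)) (Fin (n+1)) ℂ), N⁻¹ * (N * X) = X := by
    intro X; rw [← Matrix.mul_assoc, hNN', Matrix.one_mul]
  -- 1x1 scalar lemmas
  have s11 : ∀ (S : Matrix (Fin 1) (Fin 1) ℂ), S = (S 0 0) • 1 := by
    intro S; ext i j; fin_cases i; fin_cases j; simp
  have q1 : zᵀ * N * z = a • 1 := by rw [ha_def]; exact s11 _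
  have q4 : zbᵀ * N * zb = ab • 1 := by rw [hab_def]; exact s11 _
  have q2 : zᵀ * N * zb = r2 • 1 := by rw [s11 (zᵀ * N * zb), ← hr2]
  have htr : zbᵀ * N * z = (zᵀ * N * zb)ᵀ := by
    rw [Matrix.transpose_mul, Matrix.transpose_mul, Matrix.transpose_transpose,
      hNsymm, Matrix.mul_assoc]
  have q3 : zbᵀ * N * z = r2 • 1 := by
    have he : (zbᵀ * N * z) 0 0 = r2 := by
      rw [htr, Matrix.transpose_apply, ← hr2]
    rw [s11 (zbᵀ * N * z), he]
  -- contraction lemmas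
  have l1 : ∀ (X : Matrix (Fin 1) (Fin (n+1)) ℂ), zᵀ * (N * (z * X)) = a • X := by
    intro X
    calc zᵀ * (N * (z * X)) = (zᵀ * N * z) * X := by
          rw [Matrix.mul_assoc, Matrix.mul_assoc]
    _ = a • X := by rw [q1, Matrix.smul_mul, Matrix.one_mul]
  have l2 : ∀ (X : Matrix (Fin 1) (Fin (n+1)) ℂ), zᵀ * (N * (zb * X)) = r2 • X := by
    intro X
    calc zᵀ * (N * (zb * X)) = (zᵀ * N * zb) * X := by
          rw [Matrix.mul_assoc, Matrix.mul_assoc]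
    _ = r2 • X := by rw [q2, Matrix.smul_mul, Matrix.one_mul]
  have l3 : ∀ (X : Matrix (Fin 1) (Fin (n+1)) ℂ), zbᵀ * (N * (z * X)) = r2 • X := by
    intro X
    calc zbᵀ * (N * (z * X)) = (zbᵀ * N * z) * X := by
          rw [Matrix.mul_assoc, Matrix.mul_assoc]
    _ = r2 • X := by rw [q3, Matrix.smul_mul, Matrix.one_mul]
  have l4 : ∀ (X : Matrix (Fin 1) (Fin (n+1)) ℂ), zbᵀ * (N * (zb * X)) = ab • X := by
    intro X
    calc zbᵀ * (N * (zb * X)) = (zbᵀ * N * zb) * X := by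
          rw [Matrix.mul_assoc, Matrix.mul_assoc]
    _ = ab • X := by rw [q4, Matrix.smul_mul, Matrix.one_mul]
  -- the inverse of cI
  have hMinv : cI * ((-2:ℂ) • N⁻¹ + (2/r2) • (z * zbᵀ + zb * zᵀ)) = 1 := by
    rw [hcImat, hvv_def, hwv_def]
    simp only [Matrix.mul_add, Matrix.add_mul, Matrix.smul_mul, Matrix.mul_smul,
      smul_add, smul_smul, Matrix.mul_assoc, l1, l2, l3, l4, lNi, lNi', hNN, hNN',
      Matrix.mul_one, Matrix.one_mul]
    match_scalars <;> (field_simp <;> ring)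
  have hcIinv : cI⁻¹ = (-2:ℂ) • N⁻¹ + (2/r2) • (z * zbᵀ + zb * zᵀ) :=
    Matrix.inv_eq_right_inv hMinv
  -- express F and Fb in terms of R0 and N
  have hIN : Complex.I • N = F - Fb := by
    rw [hN, smul_smul, mul_inv_cancel₀ Complex.I_ne_zero, one_smul]
  have hFsub : F = (1/2 : ℂ) • R0 + (Complex.I/2 : ℂ) • N := by
    rw [hR0, show (Complex.I/2 : ℂ) = (1/2 : ℂ) * Complex.I from by ring,
      ← smul_smul, hIN]
    module
  have hFbsub : Fb = (1/2 : ℂ) • R0 + (-Complex.I/2 : ℂ) • N := by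
    have hIN' : (-Complex.I) • N = Fb - F := by rw [neg_smul, hIN, neg_sub]
    rw [hR0, show (-Complex.I/2 : ℂ) = (1/2 : ℂ) * (-Complex.I) from by ring,
      ← smul_smul, hIN']
    module
  rw [Matrix.fromBlocks_smul, Matrix.fromBlocks_smul, Matrix.fromBlocks_smul,
    Matrix.fromBlocks_add]
  refine Matrix.fromBlocks_inj.mpr ⟨?_, ?_, ?_, ?_⟩
  · rw [hcIinv]
    match_scalars <;> (field_simp <;> ring)
  · rw [hcIinv, hcRmat, hvv_def, hwv_def, hFsub, hFbsub]
    simp only [Matrix.mul_add, Matrix.add_mul, Matrix.smul_mul, Matrix.mul_smul,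
      smul_add, smul_smul, Matrix.mul_assoc, l1, l2, l3, l4, lNi, lNi', hNN, hNN',
      Matrix.mul_one, Matrix.one_mul]
    match_scalars <;> (field_simp <;> (try ring_nf) <;>
      (try simp only [Complex.I_sq]) <;> (try field_simp) <;> (try ring))
  · rw [hcIinv, hcRmat, hvv_def, hwv_def, hFsub, hFbsub]
    simp only [Matrix.mul_add, Matrix.add_mul, Matrix.smul_mul, Matrix.mul_smul,
      smul_add, smul_smul, Matrix.mul_assoc, l1, l2, l3, l4, lNi, lNi', hNN, hNN',
      Matrix.mul_one, Matrix.one_mul]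
    match_scalars <;> (field_simp <;> (try ring_nf) <;>
      (try simp only [Complex.I_sq]) <;> (try field_simp) <;> (try ring))
  · rw [hcIinv, hcRmat, hcImat, hvv_def, hwv_def, hFsub, hFbsub]
    simp only [Matrix.mul_add, Matrix.add_mul, Matrix.smul_mul, Matrix.mul_smul,
      smul_add, smul_smul, Matrix.mul_assoc, l1, l2, l3, l4, lNi, lNi', hNN, hNN',
      Matrix.mul_one, Matrix.one_mul]
    match_scalars <;> (field_simp <;> (try ring_nf) <;>
      (try simp only [Complex.I_sq]) <;> (try field_simp) <;> (try ring))
end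

section
/- Let I = Im 𝒩 with 𝒩_{IJ} = F̄_{IJ} + i (Nz)_I (Nz)_J / (z^t N z). Then the fiber metric identity holds: ∑ dp_a Ĥ^{ab} dp_b = -2 ∑ A_I N^{IJ} Ā_J + (4/r²)(∑ z^I A_I)(∑ z̄^J Ā_J), where (p_a) = (ζ̃_I, ζ^J), A_I = dζ̃_I + ∑_J F_{IJ} dζ^J, and Ĥ is the block matrix ((I^{-1}, I^{-1}R),(R I^{-1}, I + R I^{-1}R)) with R = Re 𝒩. -/
set_option maxHeartbeats 1600000
open Matrix
private lemma one1 (M : Matrix (Fin 1) (Fin 1) ℂ) : M = M 0 0 • 1 := by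
  ext i j
  fin_cases i <;> fin_cases j <;> simp
private lemma t11 (M : Matrix (Fin 1) (Fin 1) ℂ) : Mᵀ 0 0 = M 0 0 := rfl
private lemma sym11 {m : ℕ} (α β : Matrix (Fin m) (Fin 1) ℂ) : (αᵀ * β) 0 0 = (βᵀ * α) 0 0 := by
  simp [Matrix.mul_apply, mul_comm]
private lemma outer_apply {m : ℕ} (α β : Matrix (Fin m) (Fin 1) ℂ) (i j : Fin m) :
    (α * βᵀ) i j = α i 0 * β j 0 := by
  simp [Matrix.mul_apply]
/-- The fiber metric identity
`∑ dp_a Ĥ^{ab} dp_b = -2 ∑ A_I N^{IJ} Ā_J + (4/r²)(∑ z^I A_I)(∑ z̄^J Ā_J)`,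
formalized as an identity of bilinear forms in the `2n+2` real variables
`(dζ̃_I, dζ^J)` (encoded by real-entried column vectors `X`, `Y`). -/
theorem stmt_4 {n : ℕ} (F : Matrix (Fin (n+1)) (Fin (n+1)) ℂ)
    (hFsymm : Fᵀ = F)
    (Fb : Matrix (Fin (n+1)) (Fin (n+1)) ℂ) (hFb : Fb = F.map (starRingEnd ℂ))
    (N : Matrix (Fin (n+1)) (Fin (n+1)) ℂ)
    (hN : N = (Complex.I)⁻¹ • (F - Fb))    -- N = 2 Im F
    (hNdet : IsUnit N.det)
    (z zb : Matrix (Fin (n+1)) (Fin 1) ℂ) (hzb : zb = z.map (starRingEnd ℂ))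
    (r2 : ℂ) (hr2 : r2 = (zᵀ * N * zb) 0 0)
    (hr2pos : 0 < r2.re ∧ r2.im = 0)
    (hzz : (zᵀ * N * z) 0 0 ≠ 0)
    (𝒩 : Matrix (Fin (n+1)) (Fin (n+1)) ℂ)
    (h𝒩 : ∀ I J, 𝒩 I J = Fb I J + Complex.I * ((N * z) I 0) * ((N * z) J 0) / (zᵀ * N * z) 0 0)
    (cI cR : Matrix (Fin (n+1)) (Fin (n+1)) ℂ)
    (hcI : ∀ I J, cI I J = (𝒩 I J - (starRingEnd ℂ) (𝒩 I J)) / (2 * Complex.I))  -- I = Im 𝒩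
    (hcR : ∀ I J, cR I J = (𝒩 I J + (starRingEnd ℂ) (𝒩 I J)) / 2)               -- R = Re 𝒩
    (hcIdet : IsUnit cI.det)
    (X Y : Matrix (Fin (n+1)) (Fin 1) ℂ)
    (hX : ∀ i, (X i 0).im = 0) (hY : ∀ i, (Y i 0).im = 0)
    (A : Matrix (Fin (n+1)) (Fin 1) ℂ) (hA : A = X + F * Y)   -- A_I = dζ̃_I + ∑ F_{IJ} dζ^J
    (p : Matrix (Fin (n+1) ⊕ Fin (n+1)) (Fin 1) ℂ)
    (hp : ∀ i, p (Sum.inl i) 0 = X i 0 ∧ p (Sum.inr i) 0 = Y i 0) :  -- (p_a) = (ζ̃_I, ζ^J)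
    (pᵀ * fromBlocks cI⁻¹ (cI⁻¹ * cR) (cR * cI⁻¹) (cI + cR * cI⁻¹ * cR) * p) 0 0
      = (-2 : ℂ) * (Aᵀ * N⁻¹ * A.map (starRingEnd ℂ)) 0 0
        + (4 / r2) * ((zᵀ * A) 0 0 * (zbᵀ * A.map (starRingEnd ℂ)) 0 0) := by
  have hCC : ∀ x : ℂ, (starRingEnd ℂ) ((starRingEnd ℂ) x) = x := fun x => Complex.conj_conj x
  -- basic symmetry / reality facts
  have hFbT : Fbᵀ = Fb := by rw [hFb, ← Matrix.transpose_map, hFsymm]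
  have hNT : Nᵀ = N := by rw [hN, Matrix.transpose_smul, Matrix.transpose_sub, hFsymm, hFbT]
  have hNc : N.map (starRingEnd ℂ) = N := by
    rw [hN, hFb]
    ext i j
    simp only [Matrix.map_apply, Matrix.smul_apply, Matrix.sub_apply, smul_eq_mul,
      map_sub, Complex.inv_I, map_neg, Complex.conj_I, Complex.conj_conj, map_add, _root_.map_mul]
    ring
  have hFFb : F - Fb = Complex.I • N := by
    rw [hN, smul_smul, mul_inv_cancel₀ Complex.I_ne_zero, one_smul]
  have hF2 : F = Fb + Complex.I • N := by rw [← hFFb]; abel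
  have hXc : X.map (starRingEnd ℂ) = X := by
    ext i j
    have hj : j = 0 := Subsingleton.elim _ _
    subst hj
    simpa [Matrix.map_apply] using Complex.conj_eq_iff_im.mpr (hX i)
  have hYc : Y.map (starRingEnd ℂ) = Y := by
    ext i j
    have hj : j = 0 := Subsingleton.elim _ _
    subst hj
    simpa [Matrix.map_apply] using Complex.conj_eq_iff_im.mpr (hY i)
  set s : ℂ := (zᵀ * N * z) 0 0 with hs
  set sb : ℂ := (starRingEnd ℂ) s with hsbdef
  set w : Matrix (Fin (n+1)) (Fin 1) ℂ := N * z with hw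
  set wb : Matrix (Fin (n+1)) (Fin 1) ℂ := N * zb with hwb
  have hwc : w.map (starRingEnd ℂ) = wb := by
    rw [hw, hwb, Matrix.map_mul, hNc, ← hzb]
  have hsbm : sb = (zbᵀ * N * zb) 0 0 := by
    have h1 : (zᵀ * N * z).map (starRingEnd ℂ) = zbᵀ * N * zb := by
      rw [Matrix.map_mul, Matrix.map_mul, hNc, Matrix.transpose_map, ← hzb]
    rw [hsbdef, hs, ← h1]
    rfl
  have hsbne : sb ≠ 0 := by
    rw [hsbdef]
    intro h
    exact hzz (by simpa [hCC] using congrArg (starRingEnd ℂ) h)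
  have hr2ne : r2 ≠ 0 := by
    intro h
    rw [h] at hr2pos
    simp at hr2pos
  -- inverse facts
  have hNr : N * N⁻¹ = 1 := Matrix.mul_nonsing_inv N hNdet
  have hNl : N⁻¹ * N = 1 := Matrix.nonsing_inv_mul N hNdet
  have hNiT : N⁻¹ᵀ = N⁻¹ := by rw [Matrix.transpose_nonsing_inv, hNT]
  have hwT : wᵀ = zᵀ * N := by rw [hw, Matrix.transpose_mul, hNT]
  have hwbT : wbᵀ = zbᵀ * N := by rw [hwb, Matrix.transpose_mul, hNT]
  have hwNi : wᵀ * N⁻¹ = zᵀ := by rw [hwT, Matrix.mul_assoc, hNr, Matrix.mul_one]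
  have hwbNi : wbᵀ * N⁻¹ = zbᵀ := by rw [hwbT, Matrix.mul_assoc, hNr, Matrix.mul_one]
  have hNiw : N⁻¹ * w = z := by rw [hw, ← Matrix.mul_assoc, hNl, Matrix.one_mul]
  have hNiwb : N⁻¹ * wb = zb := by rw [hwb, ← Matrix.mul_assoc, hNl, Matrix.one_mul]
  have hr2' : (zbᵀ * N * z) 0 0 = r2 := by
    have e : (zbᵀ * N * z)ᵀ = zᵀ * N * zb := by
      rw [Matrix.transpose_mul, Matrix.transpose_mul, Matrix.transpose_transpose, hNT,
        ← Matrix.mul_assoc]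
    calc (zbᵀ * N * z) 0 0 = ((zbᵀ * N * z)ᵀ) 0 0 := (t11 _).symm
      _ = (zᵀ * N * zb) 0 0 := by rw [e]
      _ = r2 := hr2.symm
  have hwz : wᵀ * z = s • 1 := by rw [hwT, hs]; exact one1 _
  have hwzb : wᵀ * zb = r2 • 1 := by rw [hwT, hr2]; exact one1 _
  have hwbz : wbᵀ * z = r2 • 1 := by rw [hwbT, ← hr2']; exact one1 _
  have hwbzb : wbᵀ * zb = sb • 1 := by rw [hwbT, hsbm]; exact one1 _
  -- entrywise conjugates
  have hwcE : ∀ i : Fin (n+1), (starRingEnd ℂ) (w i 0) = wb i 0 := fun i => by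
    rw [← hwc]; rfl
  have hFbE : ∀ i j, (starRingEnd ℂ) (Fb i j) = F i j := fun i j => by
    rw [hFb]; simp [Matrix.map_apply, hCC]
  have h𝒩conj : ∀ i j, (starRingEnd ℂ) (𝒩 i j)
      = F i j - Complex.I * (wb i 0) * (wb j 0) / sb := by
    intro i j
    rw [h𝒩 i j, map_add, map_div₀, _root_.map_mul, _root_.map_mul, Complex.conj_I, hFbE,
      hwcE, hwcE, ← hsbdef]
    ring
  have h𝒩m : 𝒩 = Fb + (Complex.I / s) • (w * wᵀ) := by
    ext i j
    rw [h𝒩 i j]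
    simp only [Matrix.add_apply, Matrix.smul_apply, outer_apply, smul_eq_mul]
    ring
  have h𝒩bm : 𝒩.map (starRingEnd ℂ) = F - (Complex.I / sb) • (wb * wbᵀ) := by
    ext i j
    rw [Matrix.map_apply, h𝒩conj i j]
    simp only [Matrix.sub_apply, Matrix.smul_apply, outer_apply, smul_eq_mul]
    ring
  have h𝒩T : 𝒩ᵀ = 𝒩 := by
    rw [h𝒩m, Matrix.transpose_add, Matrix.transpose_smul, Matrix.transpose_mul,
      Matrix.transpose_transpose, hFbT]
  have hFbsym : ∀ i j, Fb j i = Fb i j := fun i j =>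
    (congrFun (congrFun hFbT i) j : _)
  have h𝒩sym : ∀ i j, 𝒩 j i = 𝒩 i j := fun i j => by
    rw [h𝒩 j i, h𝒩 i j, hFbsym i j]; ring
  have hcRT : cRᵀ = cR := by
    ext i j
    rw [Matrix.transpose_apply, hcR i j, hcR j i, h𝒩sym i j]
  have hcIT : cIᵀ = cI := by
    ext i j
    rw [Matrix.transpose_apply, hcI i j, hcI j i, h𝒩sym i j]
  have hNE : ∀ i j, F i j = Fb i j + Complex.I * N i j := fun i j => by
    have := congrFun (congrFun hF2 i) j
    simpa [Matrix.add_apply, Matrix.smul_apply] using this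
  have hcI2 : cI = (2:ℂ)⁻¹ • ((-1:ℂ) • N + s⁻¹ • (w * wᵀ) + sb⁻¹ • (wb * wbᵀ)) := by
    ext i j
    rw [hcI i j, h𝒩conj i j, h𝒩 i j, hNE i j]
    simp only [Matrix.smul_apply, Matrix.add_apply, outer_apply, smul_eq_mul]
    field_simp
    ring
  -- explicit inverse of cI
  set P : Matrix (Fin (n+1)) (Fin (n+1)) ℂ :=
    (-2:ℂ) • N⁻¹ + (2/r2) • (z * zbᵀ) + (2/r2) • (zb * zᵀ) with hP
  have c1 : N * (z * zbᵀ) = w * zbᵀ := by rw [← Matrix.mul_assoc, ← hw]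
  have c2 : N * (zb * zᵀ) = wb * zᵀ := by rw [← Matrix.mul_assoc, ← hwb]
  have c3 : (w * wᵀ) * N⁻¹ = w * zᵀ := by rw [Matrix.mul_assoc, hwNi]
  have c4 : (w * wᵀ) * (z * zbᵀ) = s • (w * zbᵀ) := by
    rw [Matrix.mul_assoc, ← Matrix.mul_assoc wᵀ, hwz, Matrix.smul_mul, Matrix.one_mul,
      Matrix.mul_smul]
  have c5 : (w * wᵀ) * (zb * zᵀ) = r2 • (w * zᵀ) := by
    rw [Matrix.mul_assoc, ← Matrix.mul_assoc wᵀ, hwzb, Matrix.smul_mul, Matrix.one_mul,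
      Matrix.mul_smul]
  have c6 : (wb * wbᵀ) * N⁻¹ = wb * zbᵀ := by rw [Matrix.mul_assoc, hwbNi]
  have c7 : (wb * wbᵀ) * (z * zbᵀ) = r2 • (wb * zbᵀ) := by
    rw [Matrix.mul_assoc, ← Matrix.mul_assoc wbᵀ, hwbz, Matrix.smul_mul, Matrix.one_mul,
      Matrix.mul_smul]
  have c8 : (wb * wbᵀ) * (zb * zᵀ) = sb • (wb * zᵀ) := by
    rw [Matrix.mul_assoc, ← Matrix.mul_assoc wbᵀ, hwbzb, Matrix.smul_mul, Matrix.one_mul,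
      Matrix.mul_smul]
  have hcIP : cI * P = 1 := by
    rw [hcI2, hP]
    simp only [Matrix.add_mul, Matrix.mul_add, Matrix.smul_mul, Matrix.mul_smul, smul_smul,
      hNr, c1, c2, c3, c4, c5, c6, c7, c8]
    match_scalars <;> field_simp <;> ring
  set Q : Matrix (Fin (n+1)) (Fin (n+1)) ℂ := cI⁻¹ with hQdef
  have hQP : Q = P := by rw [hQdef]; exact Matrix.inv_eq_right_inv hcIP
  have hQl : Q * cI = 1 := by rw [hQdef]; exact Matrix.nonsing_inv_mul _ hcIdet
  have hQr : cI * Q = 1 := by rw [hQdef]; exact Matrix.mul_nonsing_inv _ hcIdet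
  have k1 : ∀ M : Matrix (Fin (n+1)) (Fin 1) ℂ, cI * (Q * M) = M := fun M => by
    rw [← Matrix.mul_assoc, hQr, Matrix.one_mul]
  have k2 : ∀ M : Matrix (Fin (n+1)) (Fin 1) ℂ, Q * (cI * M) = M := fun M => by
    rw [← Matrix.mul_assoc, hQl, Matrix.one_mul]
  have hpm : p = fromRows X Y := by
    ext i j
    have hj : j = 0 := Subsingleton.elim _ _
    subst hj
    cases i with
    | inl i => simp [Matrix.fromRows_apply_inl, (hp i).1]
    | inr i => simp [Matrix.fromRows_apply_inr, (hp i).2]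
  have hLHS : pᵀ * fromBlocks Q (Q * cR) (cR * Q) (cI + cR * Q * cR) * p
      = Xᵀ * (Q * X + Q * cR * Y) + Yᵀ * (cR * Q * X + (cI + cR * Q * cR) * Y) := by
    rw [hpm, transpose_fromRows, Matrix.mul_assoc, fromBlocks_mul_fromRows,
      fromCols_mul_fromRows]
  set B : Matrix (Fin (n+1)) (Fin 1) ℂ := X + 𝒩 * Y with hB
  set Bb : Matrix (Fin (n+1)) (Fin 1) ℂ := X + (𝒩.map (starRingEnd ℂ)) * Y with hBb
  have h𝒩RI : 𝒩 = cR + Complex.I • cI := by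
    ext i j
    rw [Matrix.add_apply, Matrix.smul_apply, hcR i j, hcI i j, smul_eq_mul]
    field_simp
    ring
  have h𝒩bRI : 𝒩.map (starRingEnd ℂ) = cR - Complex.I • cI := by
    ext i j
    rw [Matrix.map_apply, Matrix.sub_apply, Matrix.smul_apply, hcR i j, hcI i j, smul_eq_mul]
    field_simp
    ring
  have key1 : Xᵀ * (Q * X + Q * cR * Y) + Yᵀ * (cR * Q * X + (cI + cR * Q * cR) * Y)
      = Bᵀ * (Q * Bb) + Complex.I • (Xᵀ * Y) - Complex.I • (Yᵀ * X) := by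
    rw [hB, hBb, h𝒩bRI, h𝒩RI]
    simp only [Matrix.transpose_add, Matrix.transpose_sub, Matrix.transpose_smul,
      Matrix.transpose_mul, hcRT, hcIT, Matrix.add_mul, Matrix.mul_add, Matrix.sub_mul,
      Matrix.mul_sub, Matrix.smul_mul, Matrix.mul_smul, Matrix.mul_assoc, k1, k2, smul_smul]
    match_scalars <;> simp [Complex.I_sq] <;> ring
  rw [hLHS, key1]
  -- cancel the antisymmetric cross terms
  have hxy : (Xᵀ * Y) 0 0 = (Yᵀ * X) 0 0 := sym11 X Y
  simp only [Matrix.add_apply, Matrix.sub_apply, Matrix.smul_apply, smul_eq_mul, hxy]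
  rw [add_sub_cancel_right]
  -- conjugate of A
  have hAb : A.map (starRingEnd ℂ) = X + Fb * Y := by
    rw [hA, Matrix.map_add _ (fun x y => map_add (starRingEnd ℂ) x y), Matrix.map_mul, hXc, hYc, ← hFb]
  set Ab : Matrix (Fin (n+1)) (Fin 1) ℂ := A.map (starRingEnd ℂ) with hAbdef
  set a : ℂ := (wᵀ * Y) 0 0 with ha
  set b : ℂ := (wbᵀ * Y) 0 0 with hbb
  set u1 : ℂ := (zᵀ * A) 0 0 with hu1
  set u2 : ℂ := (zbᵀ * A) 0 0 with hu2
  set v1 : ℂ := (zᵀ * Ab) 0 0 with hv1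
  set v2 : ℂ := (zbᵀ * Ab) 0 0 with hv2
  set g : ℂ := (Abᵀ * (N⁻¹ * A)) 0 0 with hg
  have hwy : wᵀ * Y = a • 1 := by conv_lhs => rw [one1 (wᵀ * Y), ← ha]
  have hwby : wbᵀ * Y = b • 1 := by conv_lhs => rw [one1 (wbᵀ * Y), ← hbb]
  have hzA : zᵀ * A = u1 • 1 := by conv_lhs => rw [one1 (zᵀ * A), ← hu1]
  have hzbA : zbᵀ * A = u2 • 1 := by conv_lhs => rw [one1 (zbᵀ * A), ← hu2]
  have hAbz : Abᵀ * z = v1 • 1 := by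
    conv_lhs => rw [one1 (Abᵀ * z)]
    rw [sym11, ← hv1]
  have hAbzb : Abᵀ * zb = v2 • 1 := by
    conv_lhs => rw [one1 (Abᵀ * zb)]
    rw [sym11, ← hv2]
  have hgm : Abᵀ * (N⁻¹ * A) = g • 1 := by conv_lhs => rw [one1 (Abᵀ * (N⁻¹ * A)), ← hg]
  have hwNiA : wᵀ * (N⁻¹ * A) = u1 • 1 := by rw [← Matrix.mul_assoc, hwNi, hzA]
  have hzwb : zᵀ * wb = r2 • 1 := by rw [hwb, ← Matrix.mul_assoc, ← hwT, hwzb]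
  have hzbwb : zbᵀ * wb = sb • 1 := by rw [hwb, ← Matrix.mul_assoc, ← hwbT, hwbzb]
  -- decompositions of B and Bb
  have hBA : B = Ab + (Complex.I * a / s) • w := by
    rw [hB, hAb, h𝒩m, Matrix.add_mul, Matrix.smul_mul, Matrix.mul_assoc, hwy,
      Matrix.mul_smul, Matrix.mul_one, smul_smul,
      show Complex.I / s * a = Complex.I * a / s from by ring, ← add_assoc]
  have hBbA : Bb = A + (-(Complex.I * b / sb)) • wb := by
    rw [hBb, hA, h𝒩bm, Matrix.sub_mul, Matrix.smul_mul, Matrix.mul_assoc, hwby,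
      Matrix.mul_smul, Matrix.mul_one, smul_smul,
      show Complex.I / sb * b = Complex.I * b / sb from by ring, sub_eq_add_neg, ← neg_smul,
      ← add_assoc]
  -- relations between the scalars
  have hAAb : A = Ab + Complex.I • (N * Y) := by
    rw [hAb, hA, hF2, Matrix.add_mul, Matrix.smul_mul, ← add_assoc]
  have e1 : zᵀ * A = zᵀ * Ab + (Complex.I * a) • 1 := by
    rw [hAAb, Matrix.mul_add, Matrix.mul_smul, ← Matrix.mul_assoc, ← hwT, hwy, smul_smul]
  have e2 : zbᵀ * A = zbᵀ * Ab + (Complex.I * b) • 1 := by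
    rw [hAAb, Matrix.mul_add, Matrix.mul_smul, ← Matrix.mul_assoc, ← hwbT, hwby, smul_smul]
  have hrel1 : v1 = u1 - Complex.I * a := by
    have h := congrFun (congrFun e1 0) 0
    simp only [Matrix.add_apply, Matrix.smul_apply, Matrix.one_apply_eq, smul_eq_mul, mul_one,
      ← hu1, ← hv1] at h
    linear_combination -h
  have hrel2 : u2 = v2 + Complex.I * b := by
    have h := congrFun (congrFun e2 0) 0
    simp only [Matrix.add_apply, Matrix.smul_apply, Matrix.one_apply_eq, smul_eq_mul, mul_one,
      ← hu2, ← hv2] at h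
    linear_combination h
  -- symmetric form of the RHS inverse term
  have hgsym : (Aᵀ * N⁻¹ * Ab) 0 0 = g := by
    rw [Matrix.mul_assoc]
    calc (Aᵀ * (N⁻¹ * Ab)) 0 0 = ((Aᵀ * (N⁻¹ * Ab))ᵀ) 0 0 := (t11 _).symm
      _ = (Abᵀ * (N⁻¹ * A)) 0 0 := by
          rw [Matrix.transpose_mul, Matrix.transpose_mul, Matrix.transpose_transpose, hNiT,
            Matrix.mul_assoc]
      _ = g := hg.symm
  rw [hgsym, hQP, hP, hBA, hBbA]
  simp only [Matrix.transpose_add, Matrix.transpose_smul, Matrix.add_mul, Matrix.mul_add,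
    Matrix.smul_mul, Matrix.mul_smul, Matrix.mul_assoc, hNiwb, hgm, hwNiA, hzA, hzbA, hAbz,
    hAbzb, hwz, hwzb, hzwb, hzbwb, smul_smul, Matrix.mul_one]
  simp only [Matrix.add_apply, Matrix.smul_apply, Matrix.one_apply_eq, smul_eq_mul, mul_one]
  rw [hrel1, hrel2]
  field_simp [hzz, hsbne, hr2ne]
  ring_nf
end

section
/- For c > 0 the one-loop corrected universal hypermultiplet metric g^c_{UH} = (1/(4ρ²))[((ρ+2c)/(ρ+c))dρ² + ((ρ+c)/(ρ+2c))(dφ̃ + ζ⁰dζ̃₀ - ζ̃₀dζ⁰)² + 2(ρ+2c)((dζ̃₀)² + (dζ⁰)²)] satisfies g^c_{UH} ≥ ½ g^0_{UH} pointwise on the domain {ρ > 0}; in particular, since g^0_{UH} (the complex hyperbolic metric) is complete on {ρ>0}×ℝ³, the metric g^c_{UH} is complete there. -/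
/-- The one-loop corrected universal hypermultiplet metric `g^c_{UH}` in the
coordinates `x = (ρ, φ̃, ζ̃₀, ζ⁰)`, evaluated on a tangent vector `v`. -/
noncomputable def gUH (c : ℝ) (x v : Fin 4 → ℝ) : ℝ :=
  (1 / (4 * (x 0)^2)) * ( ((x 0 + 2*c)/(x 0 + c)) * (v 0)^2
    + ((x 0 + c)/(x 0 + 2*c)) * (v 1 + x 3 * v 2 - x 2 * v 3)^2
    + 2*(x 0 + 2*c) * ((v 2)^2 + (v 3)^2) )


lemma gUH_key (c : ℝ) (hc : 0 < c) (x v : Fin 4 → ℝ) (hx : 0 < x 0) :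
    (2 * x 0)^2 * gUH c x v = ((x 0 + 2*c)/(x 0 + c)) * (v 0)^2
    + ((x 0 + c)/(x 0 + 2*c)) * (v 1 + x 3 * v 2 - x 2 * v 3)^2
    + 2*(x 0 + 2*c) * ((v 2)^2 + (v 3)^2) := by
  have h1 : x 0 + c ≠ 0 := by positivity
  have h2 : x 0 + 2*c ≠ 0 := by positivity
  have h0 : x 0 ≠ 0 := ne_of_gt hx
  rw [gUH]; field_simp; ring

lemma gUH_bounds (c : ℝ) (hc : 0 < c) (x v : Fin 4 → ℝ) (hx : 0 < x 0) :
    0 ≤ gUH c x v ∧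
    (v 0)^2 ≤ (2 * x 0)^2 * gUH c x v ∧
    (v 1 + x 3 * v 2 - x 2 * v 3)^2 ≤ (3 * x 0)^2 * gUH c x v ∧
    (v 2)^2 + (v 3)^2 ≤ 2 * x 0 * gUH c x v := by
  have key := gUH_key c hc x v hx
  set w := v 1 + x 3 * v 2 - x 2 * v 3 with hw
  set S := (v 2)^2 + (v 3)^2 with hS
  have hSnn : 0 ≤ S := by positivity
  have hA : 1 ≤ (x 0 + 2*c)/(x 0 + c) := by
    rw [le_div_iff₀ (by positivity)]; linarith
  have hB : 1/2 ≤ (x 0 + c)/(x 0 + 2*c) := by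
    rw [le_div_iff₀ (by positivity)]; linarith
  have t1 : 0 ≤ ((x 0 + 2*c)/(x 0 + c) - 1) * (v 0)^2 :=
    mul_nonneg (by linarith) (sq_nonneg _)
  have t2 : 0 ≤ ((x 0 + c)/(x 0 + 2*c) - 1/2) * w^2 :=
    mul_nonneg (by linarith) (sq_nonneg _)
  have t3 : 0 ≤ 2*(x 0 + 2*c) * S := by positivity
  have t1' : 0 ≤ ((x 0 + 2*c)/(x 0 + c)) * (v 0)^2 :=
    mul_nonneg (by linarith) (sq_nonneg _)
  have t2' : 0 ≤ ((x 0 + c)/(x 0 + 2*c)) * w^2 :=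
    mul_nonneg (by linarith) (sq_nonneg _)
  have hrhs : 0 ≤ (2 * x 0)^2 * gUH c x v := by rw [key]; clear_value w S; linarith
  have hg : 0 ≤ gUH c x v :=
    le_of_mul_le_mul_left (by rw [mul_zero]; exact hrhs) (by positivity : (0:ℝ) < (2 * x 0)^2)
  refine ⟨hg, ?_, ?_, ?_⟩
  · nlinarith
  · have h9 : (3 * x 0)^2 * gUH c x v = (9/4) * ((2 * x 0)^2 * gUH c x v) := by ring
    rw [h9, key]; nlinarith
  · rw [← mul_le_mul_iff_right₀ (show (0:ℝ) < 2 * x 0 by linarith)]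
    nlinarith

lemma abs_le_sqrt_mul {a K g : ℝ} (hK : 0 ≤ K) (h : a^2 ≤ K^2 * g) :
    |a| ≤ K * Real.sqrt g := by
  calc |a| = Real.sqrt (a^2) := (Real.sqrt_sq_eq_abs a).symm
    _ ≤ Real.sqrt (K^2 * g) := Real.sqrt_le_sqrt h
    _ = K * Real.sqrt g := by rw [Real.sqrt_mul (sq_nonneg K), Real.sqrt_sq hK]

lemma part1 (c : ℝ) (hc : 0 < c) (x : Fin 4 → ℝ) (hx : 0 < x 0) (v : Fin 4 → ℝ) :
    (1/2) * gUH 0 x v ≤ gUH c x v := by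
  have key := gUH_key c hc x v hx
  have key0 : (2 * x 0)^2 * gUH 0 x v = (v 0)^2 + (v 1 + x 3 * v 2 - x 2 * v 3)^2
      + 2 * x 0 * ((v 2)^2 + (v 3)^2) := by
    have h0 : x 0 ≠ 0 := ne_of_gt hx
    rw [gUH]
    have e1 : x 0 + 2*(0:ℝ) = x 0 := by ring
    have e2 : x 0 + (0:ℝ) = x 0 := by ring
    rw [e1, e2, div_self h0]
    field_simp; ring
  have hA : 1 ≤ (x 0 + 2*c)/(x 0 + c) := by
    rw [le_div_iff₀ (by positivity)]; linarith
  have hB : 1/2 ≤ (x 0 + c)/(x 0 + 2*c) := by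
    rw [le_div_iff₀ (by positivity)]; linarith
  have h2x : (0:ℝ) < (2 * x 0)^2 := by positivity
  rw [← mul_le_mul_iff_right₀ h2x]
  have e : (2 * x 0)^2 * ((1/2) * gUH 0 x v) = (1/2) * ((2 * x 0)^2 * gUH 0 x v) := by ring
  rw [e, key0, key]
  have t1 : 0 ≤ ((x 0 + 2*c)/(x 0 + c) - 1/2) * (v 0)^2 :=
    mul_nonneg (by linarith) (sq_nonneg _)
  have t2 : 0 ≤ ((x 0 + c)/(x 0 + 2*c) - 1/2) * (v 1 + x 3 * v 2 - x 2 * v 3)^2 :=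
    mul_nonneg (by linarith) (sq_nonneg _)
  have t3 : 0 ≤ (2*(x 0 + 2*c) - x 0) * ((v 2)^2 + (v 3)^2) :=
    mul_nonneg (by linarith) (by positivity)
  nlinarith

set_option maxHeartbeats 1000000 in
open Set MeasureTheory intervalIntegral in
lemma part2 (c : ℝ) (hc : 0 < c) (γ : ℝ → (Fin 4 → ℝ))
    (hγ : ContDiffOn ℝ 1 γ (Set.Ico (0:ℝ) 1))
    (hpos : ∀ t ∈ Set.Ico (0:ℝ) 1, 0 < γ t 0)
    (L : ℝ)
    (hL : ∀ t ∈ Set.Ico (0:ℝ) 1,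
      (∫ s in (0:ℝ)..t, Real.sqrt (gUH c (γ s) (deriv γ s))) ≤ L) :
    ∃ p : Fin 4 → ℝ, 0 < p 0 ∧
      Filter.Tendsto γ (nhdsWithin 1 (Set.Iio (1:ℝ))) (nhds p) := by
  have hUD : UniqueDiffOn ℝ (Set.Ico (0:ℝ) 1) := uniqueDiffOn_Ico 0 1
  set d := derivWithin γ (Set.Ico (0:ℝ) 1) with hd_def
  have hγc : ContinuousOn γ (Set.Ico (0:ℝ) 1) := hγ.continuousOn
  have hdc : ContinuousOn d (Set.Ico (0:ℝ) 1) := hγ.continuousOn_derivWithin hUD le_rfl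
  have hIoo : Set.Ioo (0:ℝ) 1 ⊆ Set.Ico (0:ℝ) 1 := Set.Ioo_subset_Ico_self
  have hnhds : ∀ {s : ℝ}, s ∈ Set.Ioo (0:ℝ) 1 → Set.Ico (0:ℝ) 1 ∈ nhds s :=
    fun hs => Filter.mem_of_superset (isOpen_Ioo.mem_nhds hs) hIoo
  have hderiv : ∀ s ∈ Set.Ioo (0:ℝ) 1, HasDerivAt γ (d s) s := by
    intro s hs
    have h1 : DifferentiableWithinAt ℝ γ (Set.Ico (0:ℝ) 1) s :=
      (hγ.differentiableOn one_ne_zero) s (hIoo hs)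
    have h2 : DifferentiableAt ℝ γ s := h1.differentiableAt (hnhds hs)
    have h3 := h2.hasDerivAt
    rwa [hd_def, derivWithin_of_mem_nhds (hnhds hs)]
  have hdeq : ∀ s ∈ Set.Ioo (0:ℝ) 1, deriv γ s = d s := fun s hs =>
    (derivWithin_of_mem_nhds (hnhds hs)).symm
  clear_value d
  set h1f : ℝ → ℝ := fun s => Real.sqrt (gUH c (γ s) (d s)) with hh1
  have h1nn : ∀ s, 0 ≤ h1f s := fun s => Real.sqrt_nonneg _
  have ce : ∀ i, ContinuousOn (fun s => γ s i) (Set.Ico (0:ℝ) 1) :=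
    fun i => (continuous_apply i).comp_continuousOn hγc
  have cd : ∀ i, ContinuousOn (fun s => d s i) (Set.Ico (0:ℝ) 1) :=
    fun i => (continuous_apply i).comp_continuousOn hdc
  have hgc : ContinuousOn (fun s => gUH c (γ s) (d s)) (Set.Ico (0:ℝ) 1) := by
    have hne1 : ∀ s ∈ Set.Ico (0:ℝ) 1, 4 * (γ s 0)^2 ≠ 0 :=
      fun s hs => by have := hpos s hs; positivity
    have hne2 : ∀ s ∈ Set.Ico (0:ℝ) 1, γ s 0 + c ≠ 0 :=
      fun s hs => by have := hpos s hs; positivity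
    have hne3 : ∀ s ∈ Set.Ico (0:ℝ) 1, γ s 0 + 2*c ≠ 0 :=
      fun s hs => by have := hpos s hs; positivity
    simp only [gUH]
    apply ContinuousOn.mul
    · exact ContinuousOn.div continuousOn_const
        (continuousOn_const.mul ((ce 0).pow 2)) hne1
    · apply ContinuousOn.add
      · apply ContinuousOn.add
        · exact (((ce 0).add continuousOn_const).div
            ((ce 0).add continuousOn_const) hne2).mul ((cd 0).pow 2)
        · exact (((ce 0).add continuousOn_const).div
            ((ce 0).add continuousOn_const) hne3).mul
            ((((cd 1).add ((ce 3).mul (cd 2))).sub ((ce 2).mul (cd 3))).pow 2)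
      · exact (continuousOn_const.mul ((ce 0).add continuousOn_const)).mul
          (((cd 2).pow 2).add ((cd 3).pow 2))
  have h1c : ContinuousOn h1f (Set.Ico (0:ℝ) 1) :=
    Real.continuous_sqrt.comp_continuousOn hgc
  have h0mem : (0:ℝ) ∈ Set.Ico (0:ℝ) 1 := Set.left_mem_Ico.mpr one_pos
  clear_value h1f
  have hInt : ∀ {a b : ℝ}, a ∈ Set.Ico (0:ℝ) 1 → b ∈ Set.Ico (0:ℝ) 1 →
      IntervalIntegrable h1f volume a b := fun ha hb =>
    (h1c.mono (Set.ordConnected_Ico.uIcc_subset ha hb)).intervalIntegrable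
  set F : ℝ → ℝ := fun t => ∫ s in (0:ℝ)..t, h1f s with hF_def
  have hF0 : ∀ t ∈ Set.Ico (0:ℝ) 1,
      (∫ s in (0:ℝ)..t, Real.sqrt (gUH c (γ s) (deriv γ s))) = F t := by
    intro t ht
    apply intervalIntegral.integral_congr_ae
    filter_upwards with s hs
    rw [Set.uIoc_of_le ht.1] at hs
    rw [hdeq s ⟨hs.1, lt_of_le_of_lt hs.2 ht.2⟩, hh1]
  clear_value F
  have hFL : ∀ t ∈ Set.Ico (0:ℝ) 1, F t ≤ L := fun t ht => hF0 t ht ▸ hL t ht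
  have hFadd : ∀ {a b : ℝ}, a ∈ Set.Ico (0:ℝ) 1 → b ∈ Set.Ico (0:ℝ) 1 →
      F b - F a = ∫ s in a..b, h1f s := by
    intro a b ha hb
    have h := intervalIntegral.integral_add_adjacent_intervals
      (hInt h0mem ha) (hInt ha hb)
    simp only [hF_def]; linarith
  have hFmono : ∀ {a b : ℝ}, a ∈ Set.Ico (0:ℝ) 1 → b ∈ Set.Ico (0:ℝ) 1 → a ≤ b →
      F a ≤ F b := by
    intro a b ha hb hab
    have h := hFadd ha hb
    have h2 : 0 ≤ ∫ s in a..b, h1f s :=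
      intervalIntegral.integral_nonneg hab (fun u _ => h1nn u)
    linarith
  have hFTC : ∀ (ψ dψ : ℝ → ℝ) (K : ℝ), 0 ≤ K → ∀ a b : ℝ,
      a ∈ Set.Ioo (0:ℝ) 1 → b ∈ Set.Ioo (0:ℝ) 1 → a ≤ b →
      (∀ s ∈ Set.Icc a b, HasDerivAt ψ (dψ s) s) →
      ContinuousOn dψ (Set.Icc a b) →
      (∀ s ∈ Set.Icc a b, |dψ s| ≤ K * h1f s) →
      |ψ b - ψ a| ≤ K * (F b - F a) := by
    intro ψ dψ K hK a b ha hb hab hψ hdψ hbound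
    have haI : a ∈ Set.Ico (0:ℝ) 1 := hIoo ha
    have hbI : b ∈ Set.Ico (0:ℝ) 1 := hIoo hb
    have hintd : IntervalIntegrable dψ volume a b :=
      (by rwa [Set.uIcc_of_le hab] : ContinuousOn dψ (Set.uIcc a b)).intervalIntegrable
    have heq : ∫ s in a..b, dψ s = ψ b - ψ a :=
      intervalIntegral.integral_eq_sub_of_hasDerivAt
        (fun s hs => hψ s (by rwa [Set.uIcc_of_le hab] at hs)) hintd
    rw [← heq]
    calc |∫ s in a..b, dψ s| ≤ ∫ s in a..b, |dψ s| :=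
          intervalIntegral.abs_integral_le_integral_abs hab
      _ ≤ ∫ s in a..b, K * h1f s :=
          intervalIntegral.integral_mono_on hab hintd.abs
            ((hInt haI hbI).const_mul K) hbound
      _ = K * ∫ s in a..b, h1f s := intervalIntegral.integral_const_mul K h1f
      _ = K * (F b - F a) := by rw [hFadd haI hbI]
  -- basic subsets
  have hsubI : Set.Ico (1/2:ℝ) 1 ⊆ Set.Ico (0:ℝ) 1 :=
    fun s hs => ⟨by linarith [hs.1], hs.2⟩
  have hsubIoo : Set.Ico (1/2:ℝ) 1 ⊆ Set.Ioo (0:ℝ) 1 :=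
    fun s hs => ⟨by linarith [hs.1], hs.2⟩
  have hIccsub : ∀ {x y : ℝ}, x ∈ Set.Ico (1/2:ℝ) 1 → y ∈ Set.Ico (1/2:ℝ) 1 →
      Set.Icc x y ⊆ Set.Ico (1/2:ℝ) 1 :=
    fun hx hy s hs => ⟨le_trans hx.1 hs.1, lt_of_le_of_lt hs.2 hy.2⟩
  have hhalf : (1/2:ℝ) ∈ Set.Ico (1/2:ℝ) 1 := ⟨le_refl _, by norm_num⟩
  have hcompd : ∀ (i : Fin 4), ∀ s ∈ Set.Ioo (0:ℝ) 1,
      HasDerivAt (fun t => γ t i) (d s i) s := by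
    intro i s hs
    have h := hderiv s hs
    exact hasDerivAt_pi.1 h i
  have hbnds := fun (s : ℝ) (hs : s ∈ Set.Ico (0:ℝ) 1) =>
    gUH_bounds c hc (γ s) (d s) (hpos s hs)
  -- bound on log ρ
  have hρhalf : 0 < γ (1/2) 0 := hpos _ (hsubI hhalf)
  have hFhalfL : F (1/2) ≤ L := hFL _ (hsubI hhalf)
  set C1 := 2 * (L - F (1/2)) with hC1_def
  have hC1nn : 0 ≤ C1 := by simp only [hC1_def]; linarith
  have hlog : ∀ y ∈ Set.Ico (1/2:ℝ) 1,
      |Real.log (γ y 0) - Real.log (γ (1/2) 0)| ≤ C1 := by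
    intro y hy
    have h := hFTC (fun t => Real.log (γ t 0)) (fun s => d s 0 / γ s 0) 2
      (by norm_num) (1/2) y (hsubIoo hhalf) (hsubIoo hy) hy.1
      (by
        intro s hs
        have hsh := hIccsub hhalf hy hs
        exact (hcompd 0 s (hsubIoo hsh)).log (ne_of_gt (hpos s (hsubI hsh))))
      (by
        have hsub2 : Set.Icc (1/2:ℝ) y ⊆ Set.Ico (0:ℝ) 1 :=
          fun s hs => hsubI (hIccsub hhalf hy hs)
        exact ((cd 0).mono hsub2).div ((ce 0).mono hsub2)
          (fun s hs => ne_of_gt (hpos s (hsub2 hs))))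
      (by
        intro s hs
        have hsI := hsubI (hIccsub hhalf hy hs)
        have hρ := hpos s hsI
        have h2 := (hbnds s hsI).2.1
        have h3 := abs_le_sqrt_mul (K := 2 * γ s 0) (by linarith) h2
        rw [abs_div, abs_of_pos hρ, div_le_iff₀ hρ]
        calc |d s 0| ≤ 2 * γ s 0 * Real.sqrt (gUH c (γ s) (d s)) := h3
          _ = 2 * h1f s * γ s 0 := by simp only [hh1]; ring)
    have hFy : F y ≤ L := hFL _ (hsubI hy)
    calc |Real.log (γ y 0) - Real.log (γ (1/2) 0)| ≤ 2 * (F y - F (1/2)) := h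
      _ ≤ C1 := by simp only [hC1_def]; linarith
  set a0 : ℝ := γ (1/2) 0 / Real.exp C1 with ha0_def
  set b0 : ℝ := γ (1/2) 0 * Real.exp C1 with hb0_def
  have ha0 : 0 < a0 := by positivity
  have hb0 : 0 < b0 := by positivity
  have hρbound : ∀ y ∈ Set.Ico (1/2:ℝ) 1, a0 ≤ γ y 0 ∧ γ y 0 ≤ b0 := by
    intro y hy
    have h := abs_le.1 (hlog y hy)
    have hρy : 0 < γ y 0 := hpos y (hsubI hy)
    constructor
    · have e2 : a0 = Real.exp (Real.log (γ (1/2) 0) - C1) := by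
        rw [Real.exp_sub, Real.exp_log hρhalf, ha0_def]
      rw [e2, ← Real.exp_log hρy]
      exact Real.exp_le_exp.2 (by linarith)
    · have e2 : b0 = Real.exp (Real.log (γ (1/2) 0) + C1) := by
        rw [Real.exp_add, Real.exp_log hρhalf, hb0_def]
      rw [e2, ← Real.exp_log hρy]
      exact Real.exp_le_exp.2 (by linarith)
  clear_value C1
  -- pointwise coordinate-derivative bounds on [1/2, 1)
  set K23 : ℝ := 1 + 2 * b0 with hK23_def
  have hK23 : 0 < K23 := by positivity
  clear_value K23 a0 b0
  have hq : ∀ s ∈ Set.Ico (1/2:ℝ) 1,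
      |d s 0| ≤ 2 * b0 * h1f s ∧ |d s 2| ≤ K23 * h1f s ∧ |d s 3| ≤ K23 * h1f s ∧
      |d s 1 + γ s 3 * d s 2 - γ s 2 * d s 3| ≤ 3 * b0 * h1f s := by
    intro s hs
    have hsI := hsubI hs
    have hρ := hpos s hsI
    have hρb := (hρbound s hs).2
    obtain ⟨hg0, hB0, hBw, hB23⟩ := hbnds s hsI
    have hsq : Real.sqrt (gUH c (γ s) (d s)) = h1f s := by rw [hh1]
    have hmono : ∀ {u w : ℝ}, 0 ≤ u → u ≤ w →
        u^2 * gUH c (γ s) (d s) ≤ w^2 * gUH c (γ s) (d s) :=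
      fun hu huw => mul_le_mul_of_nonneg_right (by nlinarith) hg0
    have hK23sq : 2 * γ s 0 * gUH c (γ s) (d s) ≤ K23^2 * gUH c (γ s) (d s) := by
      apply mul_le_mul_of_nonneg_right _ hg0
      simp only [hK23_def]; nlinarith [sq_nonneg b0]
    refine ⟨?_, ?_, ?_, ?_⟩
    · have h3 := abs_le_sqrt_mul (K := 2 * b0) (by linarith)
        (hB0.trans (hmono (by linarith) (by linarith)))
      rwa [hsq] at h3
    · have h3 := abs_le_sqrt_mul (K := K23) (le_of_lt hK23)
        (by nlinarith [sq_nonneg (d s 3)] :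
          (d s 2)^2 ≤ K23^2 * gUH c (γ s) (d s))
      rwa [hsq] at h3
    · have h3 := abs_le_sqrt_mul (K := K23) (le_of_lt hK23)
        (by nlinarith [sq_nonneg (d s 2)] :
          (d s 3)^2 ≤ K23^2 * gUH c (γ s) (d s))
      rwa [hsq] at h3
    · have h3 := abs_le_sqrt_mul (K := 3 * b0) (by linarith)
        (hBw.trans (hmono (by linarith) (by linarith)))
      rwa [hsq] at h3
  -- bounds on coordinates 2 and 3
  have hx23 : ∀ i, i = (2 : Fin 4) ∨ i = (3 : Fin 4) → ∀ y ∈ Set.Ico (1/2:ℝ) 1,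
      |γ y i| ≤ |γ (1/2) i| + K23 * (L - F (1/2)) := by
    intro i hi y hy
    have h := hFTC (fun t => γ t i) (fun s => d s i) K23 (le_of_lt hK23)
      (1/2) y (hsubIoo hhalf) (hsubIoo hy) hy.1
      (fun s hs => hcompd i s (hsubIoo (hIccsub hhalf hy hs)))
      ((cd i).mono (fun s hs => hsubI (hIccsub hhalf hy hs)))
      (by
        intro s hs
        have h2 := hq s (hIccsub hhalf hy hs)
        rcases hi with rfl | rfl
        · exact h2.2.1
        · exact h2.2.2.1)
    have hFy : F y ≤ L := hFL _ (hsubI hy)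
    have hmono : F (1/2) ≤ F y := hFmono (hsubI hhalf) (hsubI hy) hy.1
    have htri := abs_sub_abs_le_abs_sub (γ y i) (γ (1/2) i)
    have hKm : K23 * (F y - F (1/2)) ≤ K23 * (L - F (1/2)) :=
      mul_le_mul_of_nonneg_left (by linarith) (le_of_lt hK23)
    linarith
  set M : ℝ := 1 + |γ (1/2) 2| + |γ (1/2) 3| + K23 * (L - F (1/2)) with hM_def
  have habs2 : 0 ≤ |γ (1/2) 2| := abs_nonneg _
  have habs3 : 0 ≤ |γ (1/2) 3| := abs_nonneg _
  have hKL : 0 ≤ K23 * (L - F (1/2)) := mul_nonneg (le_of_lt hK23) (by linarith)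
  have hM1 : 1 ≤ M := by simp only [hM_def]; linarith
  have hM2 : ∀ y ∈ Set.Ico (1/2:ℝ) 1, |γ y 2| ≤ M ∧ |γ y 3| ≤ M := by
    intro y hy
    have u2 := hx23 2 (Or.inl rfl) y hy
    have u3 := hx23 3 (Or.inr rfl) y hy
    constructor
    · simp only [hM_def]; linarith
    · simp only [hM_def]; linarith
  clear_value M
  set CC : ℝ := 2 * b0 + K23 + (3 * b0 + 2 * M * K23) with hCC_def
  have hCCge : 2 * b0 ≤ CC ∧ K23 ≤ CC ∧ 3 * b0 + 2 * M * K23 ≤ CC := by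
    have hMK : 0 ≤ 2 * M * K23 := by positivity
    refine ⟨?_, ?_, ?_⟩ <;> simp only [hCC_def] <;> nlinarith
  have hCC : 0 ≤ CC := le_trans (by linarith) hCCge.1
  clear_value CC
  have hpt : ∀ (i : Fin 4), ∀ s ∈ Set.Ico (1/2:ℝ) 1, |d s i| ≤ CC * h1f s := by
    intro i s hs
    obtain ⟨q0, q2, q3, qw⟩ := hq s hs
    obtain ⟨m2, m3⟩ := hM2 s hs
    have hh := h1nn s
    fin_cases i
    · exact q0.trans (mul_le_mul_of_nonneg_right hCCge.1 hh)
    · have A1 : |γ s 3 * d s 2| ≤ M * (K23 * h1f s) := by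
        rw [abs_mul]; exact mul_le_mul m3 q2 (abs_nonneg _) (by linarith)
      have A2 : |γ s 2 * d s 3| ≤ M * (K23 * h1f s) := by
        rw [abs_mul]; exact mul_le_mul m2 q3 (abs_nonneg _) (by linarith)
      have e : d s 1 = d s 1 + γ s 3 * d s 2 - γ s 2 * d s 3 - γ s 3 * d s 2
          + γ s 2 * d s 3 := by ring
      have e' := congrArg abs e
      have T1 := abs_add_le (d s 1 + γ s 3 * d s 2 - γ s 2 * d s 3 - γ s 3 * d s 2)
        (γ s 2 * d s 3)
      have T2 := abs_sub (d s 1 + γ s 3 * d s 2 - γ s 2 * d s 3) (γ s 3 * d s 2)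
      have hfin : (3 * b0 + 2 * M * K23) * h1f s ≤ CC * h1f s :=
        mul_le_mul_of_nonneg_right hCCge.2.2 hh
      calc |d s 1| ≤ 3 * b0 * h1f s + (M * (K23 * h1f s) + M * (K23 * h1f s)) := by
            linarith [e', T1, T2, qw, A1, A2]
        _ = (3 * b0 + 2 * M * K23) * h1f s := by ring
        _ ≤ CC * h1f s := hfin
    · exact q2.trans (mul_le_mul_of_nonneg_right hCCge.2.1 hh)
    · exact q3.trans (mul_le_mul_of_nonneg_right hCCge.2.1 hh)
  have hcoord : ∀ (x y : ℝ), x ∈ Set.Ico (1/2:ℝ) 1 → y ∈ Set.Ico (1/2:ℝ) 1 →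
      x ≤ y → dist (γ x) (γ y) ≤ CC * (F y - F x) := by
    intro x y hx hy hxy
    have hnn : 0 ≤ CC * (F y - F x) := by
      have := hFmono (hsubI hx) (hsubI hy) hxy
      exact mul_nonneg hCC (by linarith)
    rw [dist_pi_le_iff hnn]
    intro i
    rw [Real.dist_eq, abs_sub_comm]
    exact hFTC (fun t => γ t i) (fun s => d s i) CC hCC x y
      (hsubIoo hx) (hsubIoo hy) hxy
      (fun s hs => hcompd i s (hsubIoo (hIccsub hx hy hs)))
      ((cd i).mono (fun s hs => hsubI (hIccsub hx hy hs)))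
      (fun s hs => hpt i s (hIccsub hx hy hs))
  -- Cauchy criterion
  have hne : (Filter.map γ (nhdsWithin 1 (Set.Iio (1:ℝ)))).NeBot := Filter.map_neBot
  have hEne : (F '' Set.Ico (1/2:ℝ) 1).Nonempty := ⟨F (1/2), ⟨1/2, hhalf, rfl⟩⟩
  have hEbdd : BddAbove (F '' Set.Ico (1/2:ℝ) 1) := by
    refine ⟨L, ?_⟩
    rintro z ⟨t, ht, rfl⟩
    exact hFL t (hsubI ht)
  set ℓ := sSup (F '' Set.Ico (1/2:ℝ) 1) with hℓ_def
  have hcauchy : Cauchy (Filter.map γ (nhdsWithin 1 (Set.Iio (1:ℝ)))) := by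
    rw [Metric.cauchy_iff]
    refine ⟨hne, fun ε hε => ?_⟩
    have hε' : 0 < ε / (CC + 1) := div_pos hε (by linarith)
    obtain ⟨z, ⟨x₀, hx₀, rfl⟩, hz⟩ := exists_lt_of_lt_csSup hEne
      (show ℓ - ε / (CC + 1) < ℓ by linarith)
    refine ⟨γ '' Set.Ico x₀ 1, ?_, ?_⟩
    · rw [Filter.mem_map]
      apply Filter.mem_of_superset (Ioo_mem_nhdsLT_of_mem ⟨hx₀.2, le_refl (1:ℝ)⟩)
      exact fun s hs => Set.mem_preimage.2
        (Set.mem_image_of_mem γ ⟨le_of_lt hs.1, hs.2⟩)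
    · have key : ∀ {x y : ℝ}, x ∈ Set.Ico x₀ 1 → y ∈ Set.Ico x₀ 1 → x ≤ y →
          dist (γ x) (γ y) < ε := by
        intro x y hx hy hxy
        have hx' : x ∈ Set.Ico (1/2:ℝ) 1 := ⟨le_trans hx₀.1 hx.1, hx.2⟩
        have hy' : y ∈ Set.Ico (1/2:ℝ) 1 := ⟨le_trans hx₀.1 hy.1, hy.2⟩
        have hFy : F y ≤ ℓ := le_csSup hEbdd ⟨y, hy', rfl⟩
        have hFx : F x₀ ≤ F x := hFmono (hsubI hx₀) (hsubI hx') hx.1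
        have hd1 : F y - F x < ε / (CC + 1) := by linarith
        have h2 : CC * (F y - F x) ≤ CC * (ε / (CC + 1)) :=
          mul_le_mul_of_nonneg_left (le_of_lt hd1) hCC
        have h3 : CC * (ε / (CC + 1)) < (CC + 1) * (ε / (CC + 1)) :=
          mul_lt_mul_of_pos_right (by linarith) hε'
        have h4 : (CC + 1) * (ε / (CC + 1)) = ε := by field_simp
        have h5 := hcoord x y hx' hy' hxy
        linarith
      rintro u ⟨x, hx, rfl⟩ v ⟨y, hy, rfl⟩
      rcases le_total x y with h | h
      · exact key hx hy h
      · rw [dist_comm]; exact key hy hx h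
  obtain ⟨p, hp⟩ := CompleteSpace.complete hcauchy
  have hT : Filter.Tendsto γ (nhdsWithin 1 (Set.Iio (1:ℝ))) (nhds p) := hp
  refine ⟨p, ?_, hT⟩
  have h0 : Filter.Tendsto (fun t => γ t 0) (nhdsWithin 1 (Set.Iio (1:ℝ)))
      (nhds (p 0)) := ((continuous_apply (0 : Fin 4)).tendsto p).comp hT
  have hev : ∀ᶠ t in nhdsWithin 1 (Set.Iio (1:ℝ)), a0 ≤ γ t 0 := by
    apply Filter.mem_of_superset
      (Ioo_mem_nhdsLT_of_mem (⟨by norm_num, le_refl (1:ℝ)⟩ : (1:ℝ) ∈ Set.Ioc (1/2) 1))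
    intro t ht
    exact (hρbound t ⟨le_of_lt ht.1, ht.2⟩).1
  have hp0 : a0 ≤ p 0 := ge_of_tendsto h0 hev
  linarith

/-- For `c > 0`, `g^c_{UH} ≥ ½ g^0_{UH}` pointwise on `{ρ > 0}`, and
`g^c_{UH}` is complete on `{ρ > 0} × ℝ³`: every C¹ curve `γ : [0,1) → {ρ>0}` of
bounded `g^c_{UH}`-length has a limit point in the domain. -/
theorem stmt_10 (c : ℝ) (hc : 0 < c) :
    (∀ x : Fin 4 → ℝ, 0 < x 0 → ∀ v : Fin 4 → ℝ, (1/2) * gUH 0 x v ≤ gUH c x v) ∧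
    (∀ γ : ℝ → (Fin 4 → ℝ), ContDiffOn ℝ 1 γ (Set.Ico (0:ℝ) 1) →
      (∀ t ∈ Set.Ico (0:ℝ) 1, 0 < γ t 0) →
      (∃ L : ℝ, ∀ t ∈ Set.Ico (0:ℝ) 1,
        (∫ s in (0:ℝ)..t, Real.sqrt (gUH c (γ s) (deriv γ s))) ≤ L) →
      ∃ p : Fin 4 → ℝ, 0 < p 0 ∧
        Filter.Tendsto γ (nhdsWithin 1 (Set.Iio (1:ℝ))) (nhds p)) := by
  refine ⟨fun x hx v => part1 c hc x hx v, fun γ hγ hpos hlen => ?_⟩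
  obtain ⟨L, hL⟩ := hlen
  exact part2 c hc γ hγ hpos L hL
end

section
/- For c < 0, the positive definite metric g^c_{FS} on the domain {ρ > -2c} is incomplete: the curve ρ = t - 2c, 0 < t < 1 (all other coordinates constant, at a fixed point of the base) has finite length, because its length is the integral over [0,1] of the continuous function (1/(2(t-2c)))√(t/(t-c)), which is finite. -/
/-- For `c < 0`, the one-loop deformed Ferrara-Sabharwal metric
`g^c_{FS}` on `{ρ > -2c}` is incomplete: along the curve `ρ = t - 2c`, `0 < t < 1`
(all other coordinates fixed), the speed is
`√((1/(4ρ²))((ρ+2c)/(ρ+c))) = (1/(2(t-2c)))√(t/(t-c))`, a function which is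
integrable on `(0,1)`, so the curve has finite length. -/
theorem stmt_12 (c : ℝ) (hc : c < 0) :
    (∀ t ∈ Set.Ioo (0:ℝ) 1,
      (1/(2*(t - 2*c))) * Real.sqrt (t/(t - c))
        = Real.sqrt ((1/(4*(t - 2*c)^2)) * (((t - 2*c) + 2*c)/((t - 2*c) + c)))) ∧
    MeasureTheory.IntegrableOn
      (fun t => (1/(2*(t - 2*c))) * Real.sqrt (t/(t - c))) (Set.Ioo 0 1) := by
  constructor
  · intro t ht
    obtain ⟨ht0, ht1⟩ := ht
    have h2c : 0 < t - 2*c := by linarith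
    have hsq : (1/(4*(t - 2*c)^2)) = (1/(2*(t - 2*c)))^2 := by field_simp; ring
    rw [hsq]
    rw [show ((t - 2*c) + 2*c)/((t - 2*c) + c) = t/(t - c) by ring_nf]
    rw [Real.sqrt_mul (sq_nonneg _), Real.sqrt_sq (by positivity)]
  · have hcont : ContinuousOn (fun t => (1/(2*(t - 2*c))) * Real.sqrt (t/(t - c)))
        (Set.Icc 0 1) := by
      apply ContinuousOn.mul
      · apply ContinuousOn.div continuousOn_const
        · fun_prop
        · intro t ht
          have := ht.1
          nlinarith [ht.1]
      · apply ContinuousOn.sqrt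
        apply ContinuousOn.div
        · fun_prop
        · fun_prop
        · intro t ht
          have := ht.1
          nlinarith [ht.1]
    exact (hcont.integrableOn_compact isCompact_Icc).mono_set Set.Ioo_subset_Icc_self
end

section
/- Let λ = ±1, c ∈ ℝ. The one-parameter family of metrics g' = (1/(2|ρ|))[λ(ρ+c)ğ - (1/(4ρ))·((ρ+2c)/(ρ+c))dρ² - (1/(4ρ))·((ρ+c)/(ρ+2c))(dφ̃ - 2c η̃)²], where ğ is a pseudo-Kähler metric of signature (2k, 2l), has signature (2k, 2l+2) on the set where ρ ∈ I₊ and signature (2k+2, 2l) where ρ ∈ I₋, with I₊ = (max{0,-2c}, ∞) for λ=1 and (min{-2c,0}, -c) for λ=-1, and I₋ = (-c, max{0,-2c}) for λ=1 and (-∞, min{-2c,0}) for λ=-1. -/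
open scoped Classical

private lemma coeff_neg {ρ q : ℝ} (hρ : ρ ≠ 0) (h : 0 < ρ * q) :
    (1/(2*|ρ|)) * (-(1/(4*ρ)) * q) < 0 := by
  have habs : 0 < |ρ| := abs_pos.mpr hρ
  have h2 : 0 < q / ρ := by
    have : (0:ℝ) < (ρ * q) / ρ ^ 2 := div_pos h (by positivity)
    calc (0:ℝ) < (ρ * q) / ρ ^ 2 := this
      _ = q / ρ := by field_simp
  have heq : -(1/(4*ρ)) * q = -((q / ρ) / 4) := by field_simp
  have hneg : -(1/(4*ρ)) * q < 0 := by rw [heq]; linarith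
  exact mul_neg_of_pos_of_neg (by positivity) hneg

private lemma coeff_pos {ρ q : ℝ} (hρ : ρ ≠ 0) (h : ρ * q < 0) :
    0 < (1/(2*|ρ|)) * (-(1/(4*ρ)) * q) := by
  have habs : 0 < |ρ| := abs_pos.mpr hρ
  have h2 : q / ρ < 0 := by
    have : (ρ * q) / ρ ^ 2 < 0 := div_neg_of_neg_of_pos h (by positivity)
    calc q / ρ = (ρ * q) / ρ ^ 2 := by field_simp
      _ < 0 := this
  have heq : -(1/(4*ρ)) * q = -((q / ρ) / 4) := by field_simp
  have hpos : 0 < -(1/(4*ρ)) * q := by rw [heq]; linarith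
  exact mul_pos (by positivity) hpos

private lemma first_pos {lam c ρ : ℝ} (hr : 0 < lam * (ρ + c)) (hρ : ρ ≠ 0) :
    0 < lam * (ρ + c) / (2 * |ρ|) := by
  have habs : 0 < |ρ| := abs_pos.mpr hρ
  exact div_pos hr (by positivity)

/-- Signature of the K/K-correspondence metric
`g' = (1/(2|ρ|))[λ(ρ+c)ğ - (1/(4ρ))((ρ+2c)/(ρ+c))dρ² - (1/(4ρ))((ρ+c)/(ρ+2c))(dφ̃-2cη̃)²]`.
With `ğ` of signature `(2k,2l)` and `r² = λ(ρ+c) > 0`, on `I₊` the coefficient of `ğ`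
is positive and the coefficients of `dρ²` and `(dφ̃-2cη̃)²` are negative (signature
`(2k, 2l+2)`), while on `I₋` all three coefficients are positive (signature
`(2k+2, 2l)`). -/
theorem stmt_13 (lam c ρ : ℝ) (hlam : lam = 1 ∨ lam = -1)
    (hr : 0 < lam * (ρ + c))
    (Iplus Iminus : Set ℝ)
    (hIp : Iplus = if lam = 1 then Set.Ioi (max 0 (-2*c)) else Set.Ioo (min (-2*c) 0) (-c))
    (hIm : Iminus = if lam = 1 then Set.Ioo (-c) (max 0 (-2*c)) else Set.Iio (min (-2*c) 0)) :
    (ρ ∈ Iplus →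
      0 < lam * (ρ + c) / (2 * |ρ|) ∧
      (1/(2*|ρ|)) * (-(1/(4*ρ)) * ((ρ + 2*c)/(ρ + c))) < 0 ∧
      (1/(2*|ρ|)) * (-(1/(4*ρ)) * ((ρ + c)/(ρ + 2*c))) < 0) ∧
    (ρ ∈ Iminus →
      0 < lam * (ρ + c) / (2 * |ρ|) ∧
      0 < (1/(2*|ρ|)) * (-(1/(4*ρ)) * ((ρ + 2*c)/(ρ + c))) ∧
      0 < (1/(2*|ρ|)) * (-(1/(4*ρ)) * ((ρ + c)/(ρ + 2*c)))) := by
  rcases hlam with h1 | h1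
  · -- lam = 1, so ρ + c > 0
    subst h1
    have hpc : 0 < ρ + c := by linarith [hr]
    rw [if_pos rfl] at hIp hIm
    subst hIp hIm
    constructor
    · intro hmem
      rw [Set.mem_Ioi] at hmem
      have hρ0 : 0 < ρ := lt_of_le_of_lt (le_max_left 0 (-2*c)) hmem
      have hp2c : 0 < ρ + 2*c := by
        rcases le_or_gt 0 c with hc | hc
        · linarith
        · have : -2*c < ρ := lt_of_le_of_lt (le_max_right 0 (-2*c)) hmem; linarith
      have hρ : ρ ≠ 0 := ne_of_gt hρ0
      refine ⟨first_pos hr hρ, ?_, ?_⟩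
      · exact coeff_neg hρ (mul_pos hρ0 (div_pos hp2c hpc))
      · exact coeff_neg hρ (mul_pos hρ0 (div_pos hpc hp2c))
    · intro hmem
      rw [Set.mem_Ioo] at hmem
      obtain ⟨hm1, hm2⟩ := hmem
      -- ρ + c > 0 and ρ < max 0 (-2c)
      rcases le_or_gt c 0 with hc | hc
      · -- c ≤ 0: max = -2c, so ρ < -2c, i.e. ρ + 2c < 0; ρ > -c ≥ 0
        have hmax : max 0 (-2*c) = -2*c := max_eq_right (by linarith)
        rw [hmax] at hm2
        have hρ0 : 0 < ρ := by linarith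
        have hp2c : ρ + 2*c < 0 := by linarith
        have hρ : ρ ≠ 0 := ne_of_gt hρ0
        refine ⟨first_pos hr hρ, ?_, ?_⟩
        · exact coeff_pos hρ (mul_neg_of_pos_of_neg hρ0 (div_neg_of_neg_of_pos hp2c hpc))
        · exact coeff_pos hρ (mul_neg_of_pos_of_neg hρ0 (div_neg_of_pos_of_neg hpc hp2c))
      · -- c > 0: max = 0, so ρ < 0; ρ + 2c > -c + 2c = c > 0
        have hmax : max 0 (-2*c) = 0 := max_eq_left (by linarith)
        rw [hmax] at hm2
        have hp2c : 0 < ρ + 2*c := by linarith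
        have hρ : ρ ≠ 0 := ne_of_lt hm2
        refine ⟨first_pos hr hρ, ?_, ?_⟩
        · exact coeff_pos hρ (mul_neg_of_neg_of_pos hm2 (div_pos hp2c hpc))
        · exact coeff_pos hρ (mul_neg_of_neg_of_pos hm2 (div_pos hpc hp2c))
  · -- lam = -1, so ρ + c < 0
    subst h1
    have hpc : ρ + c < 0 := by nlinarith [hr]
    have hne : (-1 : ℝ) ≠ 1 := by norm_num
    rw [if_neg hne] at hIp hIm
    subst hIp hIm
    constructor
    · intro hmem
      rw [Set.mem_Ioo] at hmem
      obtain ⟨hm1, hm2⟩ := hmem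
      rcases le_or_gt c 0 with hc | hc
      · -- c ≤ 0: min = 0, so ρ > 0; ρ + 2c < c ≤ 0
        have hmin : min (-2*c) 0 = 0 := min_eq_right (by linarith)
        rw [hmin] at hm1
        have hp2c : ρ + 2*c < 0 := by linarith
        have hρ : ρ ≠ 0 := ne_of_gt hm1
        refine ⟨first_pos hr hρ, ?_, ?_⟩
        · exact coeff_neg hρ (mul_pos hm1 (div_pos_of_neg_of_neg hp2c hpc))
        · exact coeff_neg hρ (mul_pos hm1 (div_pos_of_neg_of_neg hpc hp2c))
      · -- c > 0: min = -2c, so ρ > -2c, ρ + 2c > 0; ρ < -c < 0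
        have hmin : min (-2*c) 0 = -2*c := min_eq_left (by linarith)
        rw [hmin] at hm1
        have hρ0 : ρ < 0 := by linarith
        have hp2c : 0 < ρ + 2*c := by linarith
        have hρ : ρ ≠ 0 := ne_of_lt hρ0
        refine ⟨first_pos hr hρ, ?_, ?_⟩
        · exact coeff_neg hρ (mul_pos_of_neg_of_neg hρ0 (div_neg_of_pos_of_neg hp2c hpc))
        · exact coeff_neg hρ (mul_pos_of_neg_of_neg hρ0 (div_neg_of_neg_of_pos hpc hp2c))
    · intro hmem
      rw [Set.mem_Iio] at hmem
      have hρ0 : ρ < 0 := lt_of_lt_of_le hmem (min_le_right _ _)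
      have hp2c : ρ + 2*c < 0 := by
        have := lt_of_lt_of_le hmem (min_le_left (-2*c) 0); linarith
      have hρ : ρ ≠ 0 := ne_of_lt hρ0
      refine ⟨first_pos hr hρ, ?_, ?_⟩
      · exact coeff_pos hρ (mul_neg_of_neg_of_pos hρ0 (div_pos_of_neg_of_neg hp2c hpc))
      · exact coeff_pos hρ (mul_neg_of_neg_of_pos hρ0 (div_pos_of_neg_of_neg hpc hp2c))
end
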